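/- arXiv:1106.1700 — 5 statements merged into one kernel-verified Lean document; each statement's English description precedes it below -/
import Mathlib

section
/- Let c : ℝ → ℝ be twice continuously differentiable with c(x) > 0 for all x, and let u : ℝ × ℝ → ℝ be twice continuously differentiable and satisfy ∂ₜu + ∂ₓ(c(x)·u) = 0 everywhere. Fix t ∈ ℝ, Δt > 0, and let x(·) solve x'(s) = c(x(s)) with x(Δt) = x_k, and set y_k = x(0). Then u(t + Δt, x_k) = (c(y_k)/c(x_k))·u(t, y_k), and ∂ₓu(t + Δt, x_k) = (c'(y_k)/c(x_k) − c'(x_k)/c(x_k))·(c(y_k)/c(x_k))·u(t, y_k) + (c(y_k)/c(x_k))²·∂ₓu(t, y_k). -/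
/-!
Both `q = c u` and `w = c ∂ₓq` solve the homogeneous transport equation `∂ₜf + c ∂ₓf = 0`:
for `q` this is the conservation law multiplied by `c`, and differentiating `∂ₜq = -c ∂ₓq` in `x`
(with the mixed partials of `q` commuting) gives `∂ₜw = -c ∂ₓw`. Solutions of the transport
equation are constant along characteristics, so `q` and `w` at `(t + Δt, x_k)` equal their values
at `(t, y_k)`. The first identity is the statement for `q`; expanding `∂ₓq = c' u + c ∂ₓu` in the
one for `w` gives the second.
-/

open Function

section PartialDerivatives

variable {F : ℝ → ℝ → ℝ}

lemma hasDerivAt_fst_of_differentiableAt_uncurry {t x : ℝ}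
    (hF : DifferentiableAt ℝ (uncurry F) (t, x)) :
    HasDerivAt (fun s => F s x) (fderiv ℝ (uncurry F) (t, x) (1, 0)) t := by
  have hchain := hF.hasFDerivAt.comp_hasDerivAt t ((hasDerivAt_id t).prodMk (hasDerivAt_const t x))
  exact hchain

lemma hasDerivAt_snd_of_differentiableAt_uncurry {t x : ℝ}
    (hF : DifferentiableAt ℝ (uncurry F) (t, x)) :
    HasDerivAt (F t) (fderiv ℝ (uncurry F) (t, x) (0, 1)) x := by
  have hchain := hF.hasFDerivAt.comp_hasDerivAt x ((hasDerivAt_const x t).prodMk (hasDerivAt_id x))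
  exact hchain

lemma hasDerivAt_uncurry_comp {a b : ℝ → ℝ} {a' b' s : ℝ}
    (hF : DifferentiableAt ℝ (uncurry F) (a s, b s)) (ha : HasDerivAt a a' s)
    (hb : HasDerivAt b b' s) :
    HasDerivAt (fun r => F (a r) (b r))
      (deriv (fun r => F r (b s)) (a s) * a' + deriv (F (a s)) (b s) * b') s := by
  have hchain := hF.hasFDerivAt.comp_hasDerivAt s (ha.prodMk hb)
  rw [(hasDerivAt_fst_of_differentiableAt_uncurry hF).deriv,
    (hasDerivAt_snd_of_differentiableAt_uncurry hF).deriv]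
  refine hchain.congr_deriv ?_
  have hsplit : ((a', b') : ℝ × ℝ) = a' • ((1 : ℝ), (0 : ℝ)) + b' • ((0 : ℝ), (1 : ℝ)) := by
    simp
  rw [hsplit, map_add, map_smul, map_smul, smul_eq_mul, smul_eq_mul]
  ring

lemma contDiff_uncurry_deriv_snd {n : WithTop ℕ∞} (hF : ContDiff ℝ (n + 1) (uncurry F)) :
    ContDiff ℝ n (uncurry fun t => deriv (F t)) := by
  have hpartial : (uncurry fun t => deriv (F t)) = fun p => fderiv ℝ (uncurry F) p (0, 1) := by
    funext ⟨t, x⟩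
    exact (hasDerivAt_snd_of_differentiableAt_uncurry
      ((hF.differentiable (by simp)) (t, x))).deriv
  rw [hpartial]
  exact (hF.fderiv_right le_rfl).clm_apply contDiff_const

lemma deriv_deriv_comm (hF : ContDiff ℝ 2 (uncurry F)) (t x : ℝ) :
    deriv (fun s => deriv (F s) x) t = deriv (fun y => deriv (fun s => F s y) t) x := by
  have hF1 : Differentiable ℝ (uncurry F) := hF.differentiable (by simp)
  have hD : Differentiable ℝ (fderiv ℝ (uncurry F)) :=
    (hF.fderiv_right (m := 1) (by norm_num)).differentiable (by simp)
  have hDw : ∀ w : ℝ × ℝ, Differentiable ℝ (uncurry fun s y => fderiv ℝ (uncurry F) (s, y) w) :=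
    fun w => hD.clm_apply (differentiable_const w)
  have hfderiv_apply : ∀ (w v : ℝ × ℝ) (p : ℝ × ℝ),
      fderiv ℝ (uncurry fun s y => fderiv ℝ (uncurry F) (s, y) w) p v
        = fderiv ℝ (fderiv ℝ (uncurry F)) p v w := by
    intro w v p
    rw [show (uncurry fun s y => fderiv ℝ (uncurry F) (s, y) w)
        = fun q => fderiv ℝ (uncurry F) q w from rfl,
      ((hD p).hasFDerivAt.clm_apply (hasFDerivAt_const w p)).fderiv]
    simp
  have hx : (fun s => deriv (F s) x) = fun s => fderiv ℝ (uncurry F) (s, x) (0, 1) :=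
    funext fun s => (hasDerivAt_snd_of_differentiableAt_uncurry (hF1 _)).deriv
  have ht : (fun y => deriv (fun s => F s y) t) = fun y => fderiv ℝ (uncurry F) (t, y) (1, 0) :=
    funext fun y => (hasDerivAt_fst_of_differentiableAt_uncurry (hF1 _)).deriv
  rw [hx, ht, (hasDerivAt_fst_of_differentiableAt_uncurry (hDw _ _)).deriv,
    (hasDerivAt_snd_of_differentiableAt_uncurry (hDw _ _)).deriv,
    hfderiv_apply, hfderiv_apply]
  exact hF.contDiffAt.isSymmSndFDerivAt (by simp) _ _

end PartialDerivatives

def SolvesTransport (c : ℝ → ℝ) (F : ℝ → ℝ → ℝ) : Prop :=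
  ∀ t x, deriv (fun s => F s x) t + c x * deriv (F t) x = 0

section Transport

variable {c : ℝ → ℝ} {F : ℝ → ℝ → ℝ}

theorem SolvesTransport.apply_characteristic_eq (h : SolvesTransport c F)
    (hF : Differentiable ℝ (uncurry F)) {X : ℝ → ℝ} (hX : ∀ s, HasDerivAt X (c (X s)) s)
    (t s : ℝ) : F (t + s) (X s) = F t (X 0) := by
  have hconst : ∀ r, HasDerivAt (fun r => F (t + r) (X r)) 0 r := by
    intro r
    have hchain := hasDerivAt_uncurry_comp (hF _) ((hasDerivAt_id r).const_add t) (hX r)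
    refine hchain.congr_deriv ?_
    rw [mul_one, mul_comm _ (c _), h]
  simpa using is_const_of_deriv_eq_zero (fun r => (hconst r).differentiableAt)
    (fun r => (hconst r).deriv) s 0

lemma solvesTransport_mul_of_conservationLaw {u : ℝ → ℝ → ℝ}
    (hpde : ∀ t x, deriv (fun s => u s x) t + deriv (fun y => c y * u t y) x = 0) :
    SolvesTransport c fun t x => c x * u t x := by
  intro t x
  rw [deriv_const_mul_field, ← mul_add, hpde, mul_zero]

theorem SolvesTransport.mul_deriv_snd (h : SolvesTransport c F) (hF : ContDiff ℝ 2 (uncurry F)) :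
    SolvesTransport c fun t x => c x * deriv (F t) x := by
  intro t x
  have hFt : (fun y => deriv (fun s => F s y) t) = fun y => -(c y * deriv (F t) y) :=
    funext fun y => eq_neg_of_add_eq_zero_left (h t y)
  rw [deriv_const_mul_field, deriv_deriv_comm hF, hFt, deriv.fun_neg, mul_neg, neg_add_cancel]

end Transport

theorem stmt_1_general (c : ℝ → ℝ) (hc : ContDiff ℝ 2 c) (hcpos : ∀ x, 0 < c x)
    (u : ℝ → ℝ → ℝ) (hu : ContDiff ℝ 2 (Function.uncurry u))
    (hpde : ∀ t x, deriv (fun s => u s x) t + deriv (fun y => c y * u t y) x = 0)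
    (t Δt : ℝ)
    (X : ℝ → ℝ) (hX : ∀ s, HasDerivAt X (c (X s)) s)
    (xk yk : ℝ) (hxk : X Δt = xk) (hyk : yk = X 0) :
    u (t + Δt) xk = (c yk / c xk) * u t yk ∧
    deriv (fun x => u (t + Δt) x) xk =
      (deriv c yk / c xk - deriv c xk / c xk) * (c yk / c xk) * u t yk
        + (c yk / c xk) ^ 2 * deriv (fun x => u t x) yk := by
  set q : ℝ → ℝ → ℝ := fun t x => c x * u t x
  have hq : ContDiff ℝ 2 (uncurry q) := (hc.comp contDiff_snd).mul hu
  have hq_transport : SolvesTransport c q := solvesTransport_mul_of_conservationLaw hpde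
  have hw : ContDiff ℝ 1 (uncurry fun t x => c x * deriv (q t) x) :=
    ((hc.of_le (by norm_num)).comp contDiff_snd).mul (contDiff_uncurry_deriv_snd hq)
  have hq_const := hq_transport.apply_characteristic_eq (hq.differentiable (by simp)) hX t Δt
  have hw_const := (hq_transport.mul_deriv_snd hq).apply_characteristic_eq
    (hw.differentiable (by simp)) hX t Δt
  have hderiv_q : ∀ t x, deriv (q t) x = deriv c x * u t x + c x * deriv (u t) x := fun t x =>
    deriv_mul (hc.differentiable (by simp) x) (hasDerivAt_snd_of_differentiableAt_uncurry
      (hu.differentiable (by simp) (t, x))).differentiableAt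
  simp only [q, hderiv_q, hxk, ← hyk] at hq_const hw_const
  have hcxk := (hcpos xk).ne'
  constructor
  · field_simp
    linear_combination hq_const
  · field_simp
    linear_combination hw_const - deriv c xk * hq_const

/-- Exact update formula for the conservation law `u_t + (c(x)u)_x = 0`:
along the backward characteristic with foot `y_k = x(0)` and head `x_k = x(Δt)`,
`u(t+Δt, x_k) = (c(y_k)/c(x_k)) u(t, y_k)` and
`u_x(t+Δt, x_k) = (c'(y_k)/c(x_k) − c'(x_k)/c(x_k)) (c(y_k)/c(x_k)) u(t, y_k)
  + (c(y_k)/c(x_k))² u_x(t, y_k)`. -/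
theorem stmt_1 (c : ℝ → ℝ) (hc : ContDiff ℝ 2 c) (hcpos : ∀ x, 0 < c x)
    (u : ℝ → ℝ → ℝ) (hu : ContDiff ℝ 2 (Function.uncurry u))
    (hpde : ∀ t x, deriv (fun s => u s x) t + deriv (fun y => c y * u t y) x = 0)
    (t Δt : ℝ) (hΔt : 0 < Δt)
    (X : ℝ → ℝ) (hX : ∀ s, HasDerivAt X (c (X s)) s)
    (xk yk : ℝ) (hxk : X Δt = xk) (hyk : yk = X 0) :
    u (t + Δt) xk = (c yk / c xk) * u t yk ∧
    deriv (fun x => u (t + Δt) x) xk =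
      (deriv c yk / c xk - deriv c xk / c xk) * (c yk / c xk) * u t yk
        + (c yk / c xk) ^ 2 * deriv (fun x => u t x) yk :=
  stmt_1_general c hc hcpos u hu hpde t Δt X hX xk yk hxk hyk
end

section
/- Let c ∈ ℝ, Δx > 0, Δt > 0, and let u₀ : ℝ → ℝ be four times differentiable with |u₀⁗(x)| ≤ M for all x ∈ ℝ. Define u(t,x) = u₀(x − ct) (the exact solution of u_t + c·u_x = 0), grid points x_k = k·Δx for k ∈ ℤ, and suppose ℓ ∈ ℤ and λ ∈ [0,1] satisfy c·Δt = (ℓ + λ)·Δx. Then for every n ∈ ℕ and k ∈ ℤ, writing j = k − ℓ, U^n_m = u(nΔt, x_m) and V^n_m = ∂ₓu(nΔt, x_m) = u₀'(x_m − cnΔt), each component of the vector (U^{n+1}_k, Δx·V^{n+1}_k)ᵀ − A(λ)·(U^n_j, Δx·V^n_j)ᵀ − B(λ)·(U^n_{j−1}, Δx·V^n_{j−1})ᵀ has absolute value at most M·(Δx)⁴. -/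
/-!
The CIP update evaluates, at the foot `x_j - λΔx` of the characteristic, the cubic Hermite
interpolant of the data `(u, Δx·u_x)` at the nodes `x_{j-1}, x_j`. Since the exact solution is
transported along characteristics, the consistency defect is the Hermite interpolation error of
`u₀`. The scheme is linear and exact on cubics, so subtracting the cubic Taylor polynomial of `u₀`
at `x_{j-1}` leaves only Taylor remainders, of size `M Δx⁴ / 24` (values) and `M Δx³ / 6` (slopes);
the entries of `A(λ)` are bounded by `3/2`, which yields the bound `M Δx⁴`.
-/

/-- The matrix `A(λ)` of the CIP one-step map. -/
def cipA (l : ℝ) : Matrix (Fin 2) (Fin 2) ℝ :=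
  !![(1 - l)^2 * (1 + 2*l), -((1 - l)^2 * l);
     6 * l * (1 - l), (1 - l) * (1 - 3*l)]

/-- The matrix `B(λ)` of the CIP one-step map. -/
def cipB (l : ℝ) : Matrix (Fin 2) (Fin 2) ℝ :=
  !![l^2 * (3 - 2*l), l^2 * (1 - l);
     -(6 * l * (1 - l)), (3*l - 2) * l]

open Finset Nat Matrix

theorem abs_sub_taylor_sum_le {f : ℝ → ℝ} {n : ℕ} {M : ℝ} (hf : ContDiff ℝ (n + 1) f)
    (hM : ∀ y, |iteratedDeriv (n + 1) f y| ≤ M) (x₀ x : ℝ) :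
    |f x - ∑ k ∈ range (n + 1), iteratedDeriv k f x₀ / k ! * (x - x₀) ^ k|
      ≤ M * |x - x₀| ^ (n + 1) / (n + 1)! := by
  rcases eq_or_ne x₀ x with rfl | hx
  · simp [sum_range_succ']
  obtain ⟨y, -, hy⟩ := taylor_mean_remainder_lagrange_iteratedDeriv hx hf.contDiffOn
  have htaylor : taylorWithinEval f n (Set.uIcc x₀ x) x₀ x
      = ∑ k ∈ range (n + 1), iteratedDeriv k f x₀ / k ! * (x - x₀) ^ k := by
    rw [taylor_within_apply]
    refine sum_congr rfl fun k hk => ?_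
    rw [iteratedDerivWithin_eq_iteratedDeriv (uniqueDiffOn_uIcc hx)
      (hf.contDiffAt.of_le (by exact_mod_cast (mem_range.1 hk).le)) Set.left_mem_uIcc,
      smul_eq_mul]
    ring
  rw [← htaylor, hy, abs_div, abs_mul, abs_pow, Nat.abs_cast]
  gcongr
  exact hM y

theorem abs_deriv_sub_taylor_sum_le {f : ℝ → ℝ} {n : ℕ} {M : ℝ} (hf : ContDiff ℝ (n + 2) f)
    (hM : ∀ y, |iteratedDeriv (n + 2) f y| ≤ M) (x₀ x : ℝ) :
    |deriv f x - ∑ k ∈ range (n + 1), iteratedDeriv (k + 1) f x₀ / k ! * (x - x₀) ^ k|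
      ≤ M * |x - x₀| ^ (n + 1) / (n + 1)! := by
  simp_rw [iteratedDeriv_succ']
  exact abs_sub_taylor_sum_le hf.deriv' (by simpa [iteratedDeriv_succ'] using hM) x₀ x

theorem abs_cipA_apply_le {l : ℝ} (hl : l ∈ Set.Icc (0 : ℝ) 1) (i j : Fin 2) :
    |cipA l i j| ≤ 3 / 2 := by
  obtain ⟨hl0, hl1⟩ := hl
  rw [abs_le]
  have hl' : 0 ≤ l * (1 - l) := mul_nonneg hl0 (sub_nonneg.2 hl1)
  fin_cases i <;> fin_cases j <;>
    simp only [cipA, Fin.zero_eta, Fin.mk_one, Fin.isValue, of_apply, cons_val', cons_val_zero,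
      cons_val_one, cons_val_fin_one] <;>
    constructor <;> nlinarith [sq_nonneg (2 * l - 1), mul_nonneg hl0 hl']

/-- CIP carries the slope as an unknown of its own, so values `v` and slopes `w` are separate
arguments; slopes enter scaled by the mesh width `h`. -/
def cipDefect (v w : ℝ → ℝ) (l h a : ℝ) : Fin 2 → ℝ :=
  ![v (a - l * h), h * w (a - l * h)] - cipA l *ᵥ ![v a, h * w a]
    - cipB l *ᵥ ![v (a - h), h * w (a - h)]

theorem cipDefect_sub (v w v' w' : ℝ → ℝ) (l h a : ℝ) :
    cipDefect (v - v') (w - w') l h a = cipDefect v w l h a - cipDefect v' w' l h a := by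
  ext i
  fin_cases i <;> simp [cipDefect] <;> ring

theorem cipDefect_cubic_eq_zero (d : ℕ → ℝ) (l h a : ℝ) :
    cipDefect (fun x ↦ ∑ k ∈ range 4, d k / k ! * (x - (a - h)) ^ k)
      (fun x ↦ ∑ k ∈ range 3, d (k + 1) / k ! * (x - (a - h)) ^ k) l h a = 0 := by
  ext i
  fin_cases i <;>
    simp [cipDefect, cipA, cipB, sum_range_succ, Nat.factorial, vecHead, vecTail] <;> ring

theorem abs_cipDefect_le {v w : ℝ → ℝ} {l h a ε : ℝ} (hl : l ∈ Set.Icc (0 : ℝ) 1)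
    (hv : v (a - h) = 0) (hw : w (a - h) = 0)
    (hv_le : ∀ x ∈ ({a - l * h, a} : Set ℝ), |v x| ≤ ε)
    (hw_le : ∀ x ∈ ({a - l * h, a} : Set ℝ), |h * w x| ≤ ε) (i : Fin 2) :
    |cipDefect v w l h a i| ≤ 4 * ε := by
  have hA := abs_cipA_apply_le hl i
  have hpoint : |![v (a - l * h), h * w (a - l * h)] i| ≤ ε := by
    fin_cases i
    · simpa using hv_le _ (by simp)
    · simpa using hw_le _ (by simp)
  have hmul : |(cipA l *ᵥ ![v a, h * w a]) i| ≤ 3 / 2 * ε + 3 / 2 * ε := by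
    simp only [mulVec, dotProduct, Fin.sum_univ_two, cons_val_zero, cons_val_one]
    refine (abs_add_le _ _).trans (add_le_add ?_ ?_) <;> rw [abs_mul]
    · exact mul_le_mul (hA 0) (hv_le a (by simp)) (abs_nonneg _) (by norm_num)
    · exact mul_le_mul (hA 1) (hw_le a (by simp)) (abs_nonneg _) (by norm_num)
  have hB : cipB l *ᵥ ![v (a - h), h * w (a - h)] = 0 := by simp [hv, hw]
  rw [cipDefect, hB, sub_zero, Pi.sub_apply]
  linarith [abs_sub (![v (a - l * h), h * w (a - l * h)] i) ((cipA l *ᵥ ![v a, h * w a]) i)]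

theorem abs_cipDefect_deriv_le {f : ℝ → ℝ} {M l : ℝ} (hf : ContDiff ℝ 4 f)
    (hM : ∀ x, |iteratedDeriv 4 f x| ≤ M) (hl : l ∈ Set.Icc (0 : ℝ) 1) (h a : ℝ) (i : Fin 2) :
    |cipDefect f (deriv f) l h a i| ≤ M * h ^ 4 := by
  let p : ℝ → ℝ := fun x ↦
    ∑ k ∈ range 4, iteratedDeriv k f (a - h) / k ! * (x - (a - h)) ^ k
  let q : ℝ → ℝ := fun x ↦
    ∑ k ∈ range 3, iteratedDeriv (k + 1) f (a - h) / k ! * (x - (a - h)) ^ k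
  have hM0 : 0 ≤ M := (abs_nonneg _).trans (hM 0)
  have hnear : ∀ x ∈ ({a - l * h, a} : Set ℝ), |x - (a - h)| ≤ |h| := by
    rintro x (rfl | rfl)
    · rw [show a - l * h - (a - h) = (1 - l) * h by ring, abs_mul,
        abs_of_nonneg (by linarith [hl.2])]
      nlinarith [hl.1, abs_nonneg h]
    · simp
  have hp : ∀ x ∈ ({a - l * h, a} : Set ℝ), |(f - p) x| ≤ M * h ^ 4 / 6 := by
    intro x hx
    calc |f x - p x| ≤ M * |x - (a - h)| ^ (3 + 1) / (3 + 1)! :=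
          abs_sub_taylor_sum_le hf hM (a - h) x
      _ ≤ M * |h| ^ 4 / 24 := by gcongr M * ?_ ^ _ / _; exact hnear x hx
      _ ≤ M * h ^ 4 / 6 := by
          rw [Even.pow_abs (by decide)]
          linarith [mul_nonneg hM0 (pow_nonneg (sq_nonneg h) 2)]
  have hq : ∀ x ∈ ({a - l * h, a} : Set ℝ), |h * (deriv f - q) x| ≤ M * h ^ 4 / 6 := by
    intro x hx
    calc |h * (deriv f x - q x)| = |h| * |deriv f x - q x| := abs_mul _ _
      _ ≤ |h| * (M * |x - (a - h)| ^ (2 + 1) / (2 + 1)!) :=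
          by gcongr; exact abs_deriv_sub_taylor_sum_le hf hM (a - h) x
      _ ≤ |h| * (M * |h| ^ 3 / 6) := by gcongr |h| * (M * ?_ ^ _ / _); exact hnear x hx
      _ = M * h ^ 4 / 6 := by rw [← Even.pow_abs (by decide : Even 4)]; ring
  have hsplit : cipDefect f (deriv f) l h a = cipDefect (f - p) (deriv f - q) l h a := by
    rw [cipDefect_sub, cipDefect_cubic_eq_zero, sub_zero]
  rw [hsplit]
  refine (abs_cipDefect_le hl ?_ ?_ hp hq i).trans (by nlinarith [pow_nonneg (sq_nonneg h) 2])
  · simp [p, sum_range_succ]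
  · simp [q, sum_range_succ]

theorem stmt_3_general (c Δx Δt M : ℝ)
    (u₀ : ℝ → ℝ) (hu₀ : ContDiff ℝ 4 u₀)
    (hM : ∀ x : ℝ, |iteratedDeriv 4 u₀ x| ≤ M)
    (ℓ : ℤ) (lam : ℝ) (hlam : lam ∈ Set.Icc (0:ℝ) 1)
    (hstep : c * Δt = (ℓ + lam) * Δx)
    (U V : ℕ → ℤ → ℝ)
    (hU : ∀ (n : ℕ) (m : ℤ), U n m = u₀ (m * Δx - c * (n * Δt)))
    (hV : ∀ (n : ℕ) (m : ℤ), V n m = deriv u₀ (m * Δx - c * (n * Δt))) :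
    ∀ (n : ℕ) (k : ℤ) (i : Fin 2),
      |(![U (n+1) k, Δx * V (n+1) k]
          - (cipA lam).mulVec ![U n (k - ℓ), Δx * V n (k - ℓ)]
          - (cipB lam).mulVec ![U n (k - ℓ - 1), Δx * V n (k - ℓ - 1)]) i|
        ≤ M * Δx ^ 4 := by
  intro n k i
  set a : ℝ := ((k : ℝ) - ℓ) * Δx - c * (n * Δt)
  have hnext : (k : ℝ) * Δx - c * ((n + 1 : ℕ) * Δt) = a - lam * Δx := by
    push_cast; linear_combination -hstep
  have hupwind : ((k - ℓ : ℤ) : ℝ) * Δx - c * (n * Δt) = a := by push_cast; ring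
  have hleft : ((k - ℓ - 1 : ℤ) : ℝ) * Δx - c * (n * Δt) = a - Δx := by push_cast; ring
  simp only [hU, hV, hnext, hupwind, hleft]
  exact abs_cipDefect_deriv_le hu₀ hM hlam Δx a i

/-- Consistency of the CIP scheme for `u_t + c u_x = 0` with exact
solution `u(t,x) = u₀(x − ct)`: each component of
`(U^{n+1}_k, Δx·V^{n+1}_k)ᵀ − A(λ)(U^n_j, Δx·V^n_j)ᵀ − B(λ)(U^n_{j−1}, Δx·V^n_{j−1})ᵀ`,
with `j = k − ℓ` and `cΔt = (ℓ+λ)Δx`, is bounded by `M (Δx)⁴`. -/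
theorem stmt_3 (c Δx Δt M : ℝ) (hΔx : 0 < Δx) (hΔt : 0 < Δt)
    (u₀ : ℝ → ℝ) (hu₀ : ContDiff ℝ 4 u₀)
    (hM : ∀ x : ℝ, |iteratedDeriv 4 u₀ x| ≤ M)
    (ℓ : ℤ) (lam : ℝ) (hlam : lam ∈ Set.Icc (0:ℝ) 1)
    (hstep : c * Δt = (ℓ + lam) * Δx)
    (U V : ℕ → ℤ → ℝ)
    (hU : ∀ (n : ℕ) (m : ℤ), U n m = u₀ (m * Δx - c * (n * Δt)))
    (hV : ∀ (n : ℕ) (m : ℤ), V n m = deriv u₀ (m * Δx - c * (n * Δt))) :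
    ∀ (n : ℕ) (k : ℤ) (i : Fin 2),
      |(![U (n+1) k, Δx * V (n+1) k]
          - (cipA lam).mulVec ![U n (k - ℓ), Δx * V n (k - ℓ)]
          - (cipB lam).mulVec ![U n (k - ℓ - 1), Δx * V n (k - ℓ - 1)]) i|
        ≤ M * Δx ^ 4 :=
  stmt_3_general c Δx Δt M u₀ hu₀ hM ℓ lam hlam hstep U V hU hV
end

section
/- For every λ with 0 < λ < 1 and every θ ∈ [0, 2π], the 2×2 complex matrix G(θ,λ) has two distinct eigenvalues (i.e., both eigenvalues of G(θ,λ) are simple). -/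
open Polynomial

/-- The CIP amplification matrix `G(θ,λ) = A(λ) + e^{−iθ} B(λ)`. -/
noncomputable def cipG (θ l : ℝ) : Matrix (Fin 2) (Fin 2) ℂ :=
  (cipA l).map (fun x => (x : ℂ)) +
    Complex.exp (-(Complex.I * θ)) • (cipB l).map (fun x => (x : ℂ))

/-!
The discriminant of the characteristic polynomial of `A(λ) + z B(λ)` factors as
`4 λ² (1 - λ)² q(z)` with `q(z) = (λ² - 4λ + 1) z² + (10 + 2λ - 2λ²) z + (λ² + 2λ - 2)`.
For `0 < λ < 1` the middle coefficient of `q` exceeds the sum of the other two in absolute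
value, so `q` has no root on the unit circle; hence the discriminant of `G(θ, λ)` never vanishes.
-/

theorem Matrix.exists_charpoly_eq_of_discr_ne_zero {K : Type*} [Field K] [IsAlgClosed K]
    [NeZero (2 : K)] (M : Matrix (Fin 2) (Fin 2) K) (hM : M.discr ≠ 0) :
    ∃ z₁ z₂ : K, z₁ ≠ z₂ ∧ M.charpoly = (X - C z₁) * (X - C z₂) := by
  obtain ⟨s, hs⟩ := IsAlgClosed.exists_pow_nat_eq M.discr two_pos
  rw [discr_fin_two] at hs hM
  have hs0 : s ≠ 0 := by rintro rfl; exact hM (by simpa using hs.symm)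
  have hsub : (M.trace + s) / 2 - (M.trace - s) / 2 = s := by field_simp; ring
  have hsum : (M.trace + s) / 2 + (M.trace - s) / 2 = M.trace := by field_simp; ring
  have hprod : (M.trace + s) / 2 * ((M.trace - s) / 2) = M.det := by
    field_simp; linear_combination -hs
  refine ⟨(M.trace + s) / 2, (M.trace - s) / 2, sub_ne_zero.1 (hsub.symm ▸ hs0), ?_⟩
  rw [charpoly_fin_two]
  nth_rw 1 [← hsum]
  rw [← hprod, map_add, map_mul]
  ring

theorem quadratic_ne_zero_of_norm_eq_one {𝕜 : Type*} [NormedDivisionRing 𝕜] {a b c z : 𝕜}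
    (habc : ‖a‖ + ‖c‖ < ‖b‖) (hz : ‖z‖ = 1) : a * z ^ 2 + b * z + c ≠ 0 := by
  intro h
  have hbz : b * z = -(a * z ^ 2 + c) := by rw [eq_neg_iff_add_eq_zero, ← h]; abel
  have : ‖b‖ ≤ ‖a‖ + ‖c‖ := calc
    ‖b‖ = ‖a * z ^ 2 + c‖ := by rw [← mul_one ‖b‖, ← hz, ← norm_mul, hbz, norm_neg]
    _ ≤ ‖a * z ^ 2‖ + ‖c‖ := norm_add_le _ _
    _ = ‖a‖ + ‖c‖ := by rw [norm_mul, norm_pow, hz, one_pow, mul_one]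
  linarith

theorem discr_cipA_add_smul_cipB (l : ℝ) (z : ℂ) :
    ((cipA l).map (fun x => (x : ℂ)) + z • (cipB l).map (fun x => (x : ℂ))).discr =
      4 * l ^ 2 * (1 - l) ^ 2 * (((l ^ 2 - 4 * l + 1 : ℝ) : ℂ) * z ^ 2
        + ((10 + 2 * l - 2 * l ^ 2 : ℝ) : ℂ) * z + ((l ^ 2 + 2 * l - 2 : ℝ) : ℂ)) := by
  simp [Matrix.discr_fin_two, Matrix.trace_fin_two, Matrix.det_fin_two, cipA, cipB]
  ring

theorem cip_discr_coeff_bound {l : ℝ} (h0 : 0 < l) (h1 : l < 1) :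
    |l ^ 2 - 4 * l + 1| + |l ^ 2 + 2 * l - 2| < |10 + 2 * l - 2 * l ^ 2| := by
  rw [abs_of_pos (by nlinarith : (0 : ℝ) < 10 + 2 * l - 2 * l ^ 2)]
  have ha : |l ^ 2 - 4 * l + 1| ≤ 2 := abs_le.2 ⟨by nlinarith, by nlinarith⟩
  have hb : |l ^ 2 + 2 * l - 2| ≤ 2 := abs_le.2 ⟨by nlinarith, by nlinarith⟩
  nlinarith

theorem stmt_4_general (θ lam : ℝ)
    (hlam0 : 0 < lam) (hlam1 : lam < 1) :
    ∃ z₁ z₂ : ℂ, z₁ ≠ z₂ ∧ (cipG θ lam).charpoly = (X - C z₁) * (X - C z₂) := by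
  refine (cipG θ lam).exists_charpoly_eq_of_discr_ne_zero ?_
  rw [cipG, discr_cipA_add_smul_cipB]
  have hlam : (lam : ℂ) ≠ 0 := by exact_mod_cast hlam0.ne'
  have hlam' : (1 - lam : ℂ) ≠ 0 := by exact_mod_cast (sub_pos.2 hlam1).ne'
  refine mul_ne_zero (by simp [hlam, hlam']) (quadratic_ne_zero_of_norm_eq_one ?_ ?_)
  · simpa only [Complex.norm_real, Real.norm_eq_abs] using cip_discr_coeff_bound hlam0 hlam1
  · simp [Complex.norm_exp]

/-- For `0 < λ < 1` and `θ ∈ [0, 2π]`, the amplification matrix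
`G(θ,λ)` has two distinct (hence simple) eigenvalues: its characteristic polynomial
splits as `(X − z₁)(X − z₂)` with `z₁ ≠ z₂`. -/
theorem stmt_4 (θ lam : ℝ) (hθ : θ ∈ Set.Icc 0 (2 * Real.pi))
    (hlam0 : 0 < lam) (hlam1 : lam < 1) :
    ∃ z₁ z₂ : ℂ, z₁ ≠ z₂ ∧ (cipG θ lam).charpoly = (X - C z₁) * (X - C z₂) :=
  stmt_4_general θ lam hlam0 hlam1
end

section
/- For every θ with 0 < θ < 2π and every λ with 0 < λ < 1, every eigenvalue z ∈ ℂ of the matrix G(θ,λ) satisfies |z| < 1. -/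
open Complex ComplexConjugate

theorem Matrix.sq_sub_trace_mul_add_det_eq_zero {K : Type*} [Field K]
    {M : Matrix (Fin 2) (Fin 2) K} {z : K} (hz : z ∈ spectrum K M) :
    z ^ 2 - M.trace * z + M.det = 0 := by
  rw [Matrix.mem_spectrum_iff_isRoot_charpoly, Matrix.charpoly_fin_two] at hz
  simpa using hz

theorem Complex.norm_lt_one_of_sq_sub_mul_add_eq_zero {T D z : ℂ}
    (hz : z ^ 2 - T * z + D = 0) (hD : ‖D‖ < 1) (hTD : ‖conj T * D - T‖ < 1 - ‖D‖ ^ 2) :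
    ‖z‖ < 1 := by
  by_contra! hz1
  set w := T - z
  have hDzw : D = z * w := by linear_combination hz
  have hnormD : ‖D‖ = ‖z‖ * ‖w‖ := by rw [hDzw, norm_mul]
  have hw1 : ‖w‖ < 1 := by nlinarith [norm_nonneg w]
  have hsplit : ((1 - ‖w‖ ^ 2 : ℝ) : ℂ) * z
      = ((‖z‖ ^ 2 - 1 : ℝ) : ℂ) * w - (conj T * D - T) := by
    rw [show T = z + w by ring, hDzw, map_add]
    push_cast
    linear_combination w * mul_conj' z + z * mul_conj' w
  have htri : (1 - ‖w‖ ^ 2) * ‖z‖ ≤ (‖z‖ ^ 2 - 1) * ‖w‖ + ‖conj T * D - T‖ := by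
    have h := norm_sub_le (((‖z‖ ^ 2 - 1 : ℝ) : ℂ) * w) (conj T * D - T)
    rwa [← hsplit, norm_mul, norm_mul, norm_real, norm_real, Real.norm_of_nonneg,
      Real.norm_of_nonneg] at h
    · nlinarith
    · nlinarith [norm_nonneg w]
  -- `(1 - ‖w‖²)‖z‖ - (‖z‖² - 1)‖w‖ - (1 - ‖z‖²‖w‖²) = (‖z‖ - 1)(1 - ‖w‖)(1 - ‖z‖‖w‖) ≥ 0`
  rw [hnormD] at hTD
  nlinarith [mul_nonneg (mul_nonneg (sub_nonneg.2 hz1) (sub_nonneg.2 hw1.le))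
    (sub_nonneg.2 (hnormD ▸ hD).le)]

def cipTrace (l : ℝ) (e : ℂ) : ℂ :=
  2 * (1 - l) * (1 - l - l ^ 2) + 2 * l * (l - (1 - l) ^ 2) * e

def cipDet (l : ℝ) (e : ℂ) : ℂ :=
  (1 - l) ^ 4 - 2 * l * (1 - l) * (1 + l * (1 - l)) * e + l ^ 4 * e ^ 2

theorem trace_cipG (θ l : ℝ) : (cipG θ l).trace = cipTrace l (exp (-(I * θ))) := by
  simp [cipG, cipA, cipB, cipTrace, Matrix.trace_fin_two]
  ring

theorem det_cipG (θ l : ℝ) : (cipG θ l).det = cipDet l (exp (-(I * θ))) := by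
  simp [cipG, cipA, cipB, cipDet, Matrix.det_fin_two]
  ring

theorem conj_cipTrace (l : ℝ) (e : ℂ) : conj (cipTrace l e) = cipTrace l (conj e) := by
  simp [cipTrace, map_ofNat]

theorem conj_cipDet (l : ℝ) (e : ℂ) : conj (cipDet l e) = cipDet l (conj e) := by
  simp [cipDet, map_ofNat]

def cipGap (p s : ℝ) : ℝ := 4 * p * (3 - 9 * p - (1 - 3 * p - 2 * p ^ 2) * s - p ^ 3 * s ^ 2)

def cipSchurMargin (p s : ℝ) : ℝ :=
  16 * p ^ 4 * s ^ 2 * (3 * (1 - p) * (1 - 3 * p) + 2 * p ^ 2 * (1 - p) * s + p ^ 4 * s ^ 2)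

theorem ofReal_one_sub_re_of_norm_eq_one {e : ℂ} (he : ‖e‖ = 1) :
    ((1 - e.re : ℝ) : ℂ) = 1 - (e + e⁻¹) / 2 := by
  rw [ofReal_sub, re_eq_add_conj, inv_eq_conj he, ofReal_one]

theorem normSq_cipDet {l p s : ℝ} {e : ℂ} (he : ‖e‖ = 1) (hp : p = l * (1 - l))
    (hs : s = 1 - e.re) : normSq (cipDet l e) = 1 - cipGap p s := by
  have he0 : e ≠ 0 := norm_ne_zero_iff.1 (by simp [he])
  apply ofReal_injective
  rw [← mul_conj, conj_cipDet, ← inv_eq_conj he]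
  push_cast [cipGap, hp, hs, ofReal_one_sub_re_of_norm_eq_one he]
  simp only [cipDet]
  field_simp
  ring

theorem normSq_conj_cipTrace_mul_cipDet_sub {l p s : ℝ} {e : ℂ} (he : ‖e‖ = 1)
    (hp : p = l * (1 - l)) (hs : s = 1 - e.re) :
    normSq (conj (cipTrace l e) * cipDet l e - cipTrace l e) =
      cipGap p s ^ 2 - cipSchurMargin p s := by
  have he0 : e ≠ 0 := norm_ne_zero_iff.1 (by simp [he])
  apply ofReal_injective
  rw [← mul_conj, map_sub, map_mul, conj_conj, conj_cipTrace, conj_cipDet, ← inv_eq_conj he]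
  push_cast [cipGap, cipSchurMargin, hp, hs, ofReal_one_sub_re_of_norm_eq_one he]
  simp only [cipDet, cipTrace]
  field_simp
  ring

theorem cipGap_pos {p s : ℝ} (hp0 : 0 < p) (hp1 : p ≤ 1 / 4) (hs0 : 0 ≤ s) (hs2 : s ≤ 2) :
    0 < cipGap p s := by
  -- the bracket in `cipGap` is `1 - 3p + (2 - s)(1 - 3p) + p²s(2 - ps)`
  have h2s : 0 ≤ (2 - s) * (1 - 3 * p) := mul_nonneg (by linarith) (by linarith)
  have hps : 0 ≤ p ^ 2 * s * (2 - p * s) := by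
    have : p * s ≤ 1 / 2 := by nlinarith
    exact mul_nonneg (by positivity) (by linarith)
  unfold cipGap
  nlinarith

theorem cipSchurMargin_pos {p s : ℝ} (hp0 : 0 < p) (hp1 : p < 1 / 3) (hs0 : 0 < s) :
    0 < cipSchurMargin p s := by
  unfold cipSchurMargin
  have h1 : 0 < 1 - p := by linarith
  have h3 : 0 < 1 - 3 * p := by linarith
  positivity

/-- For `0 < θ < 2π` and `0 < λ < 1`, every eigenvalue `z` of the
amplification matrix `G(θ,λ)` satisfies `|z| < 1`. -/
theorem stmt_5 (θ lam : ℝ) (hθ0 : 0 < θ) (hθ1 : θ < 2 * Real.pi)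
    (hlam0 : 0 < lam) (hlam1 : lam < 1) :
    ∀ z ∈ spectrum ℂ (cipG θ lam), ‖z‖ < 1 := by
  intro z hz
  have hroot := Matrix.sq_sub_trace_mul_add_det_eq_zero hz
  rw [trace_cipG, det_cipG] at hroot
  set e := exp (-(I * θ)) with he_def
  have he : ‖e‖ = 1 := by
    rw [he_def, show -(I * θ) = ((-θ : ℝ) : ℂ) * I by push_cast; ring]
    exact norm_exp_ofReal_mul_I _
  have hcos : e.re = Real.cos θ := by simp [he_def, exp_re]
  set p := lam * (1 - lam) with hp
  set s := 1 - e.re with hs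
  have hp0 : 0 < p := mul_pos hlam0 (sub_pos.2 hlam1)
  have hp1 : p ≤ 1 / 4 := by nlinarith [sq_nonneg (2 * lam - 1)]
  have hs0 : 0 < s := by
    have hne : Real.cos θ ≠ 1 := fun h => hθ0.ne'
      ((Real.cos_eq_one_iff_of_lt_of_lt (by linarith [Real.pi_pos]) hθ1).1 h)
    linarith [lt_of_le_of_ne (Real.cos_le_one θ) hne]
  have hs2 : s ≤ 2 := by linarith [neg_abs_le e.re, abs_re_le_norm e]
  have hgap := cipGap_pos hp0 hp1 hs0.le hs2
  have hD := normSq_cipDet he hp hs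
  refine norm_lt_one_of_sq_sub_mul_add_eq_zero hroot ?_ ?_
  · rw [← sq_lt_one_iff₀ (norm_nonneg _), Complex.sq_norm, hD]
    linarith
  · rw [Complex.sq_norm, hD, sub_sub_cancel]
    refine lt_of_pow_lt_pow_left₀ 2 hgap.le ?_
    rw [Complex.sq_norm, normSq_conj_cipTrace_mul_cipDet_sub he hp hs]
    linarith [cipSchurMargin_pos hp0 (by linarith) hs0]
end

section
/- Let c⁻, c⁺ > 0 and α ∈ ℝ. Let u⁻, u⁺ : ℝ × ℝ → ℝ be continuously differentiable functions satisfying ∂ₜu⁻(t,x) + c⁻·∂ₓu⁻(t,x) = 0 and ∂ₜu⁺(t,x) + c⁺·∂ₓu⁺(t,x) = 0 for all (t,x), together with the interface conditions u⁻(t,α) = u⁺(t,α) and c⁻·∂ₓu⁻(t,α) = c⁺·∂ₓu⁺(t,α) for all t. Let x_j ≥ α, Δt > 0 with x_j − c⁺·Δt ≤ α, and set y_j = α + (c⁻/c⁺)·(x_j − α) − c⁻·Δt. Then for every t: u⁺(t + Δt, x_j) = u⁻(t, y_j) and ∂ₓu⁺(t + Δt, x_j) = (c⁻/c⁺)·∂ₓu⁻(t,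 y_j). -/
/-!
Along a characteristic `r ↦ (t + r, x + c r)` the derivative of a solution of `u_t + c u_x = 0`
is exactly the left-hand side of the equation, so `u` and (by translating in `x`) `u_x` are
constant along it. The characteristic through `(t + Δt, x_j)` on the right reaches the interface
at time `t + Δt - s` with `s = (x_j - α)/c⁺`; there `[u] = 0` and `[c u_x] = 0` hand the values
over to the left side, whose characteristic through `(t + Δt - s, α)` started at `(t, y_j)`.
-/

open Function

namespace Transport

variable {u : ℝ → ℝ → ℝ} {c : ℝ}

theorem fderiv_uncurry_apply {t x : ℝ} (hu : DifferentiableAt ℝ (uncurry u) (t, x)) (a b : ℝ) :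
    fderiv ℝ (uncurry u) (t, x) (a, b) =
      a * deriv (fun s => u s x) t + b * deriv (fun y => u t y) x := by
  have ht : HasDerivAt (fun s => u s x) (fderiv ℝ (uncurry u) (t, x) (1, 0)) t :=
    hu.hasFDerivAt.comp_hasDerivAt (f := fun s => (s, x)) t
      ((hasDerivAt_id t).prodMk (hasDerivAt_const t x))
  have hx : HasDerivAt (fun y => u t y) (fderiv ℝ (uncurry u) (t, x) (0, 1)) x :=
    hu.hasFDerivAt.comp_hasDerivAt (f := fun y => (t, y)) x
      ((hasDerivAt_const x t).prodMk (hasDerivAt_id x))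
  have hab : ((a, b) : ℝ × ℝ) = a • ((1 : ℝ), (0 : ℝ)) + b • ((0 : ℝ), (1 : ℝ)) := by simp
  rw [ht.deriv, hx.deriv, hab, map_add, map_smul, map_smul, smul_eq_mul, smul_eq_mul]

theorem hasDerivAt_along_characteristic {t x r : ℝ}
    (hu : DifferentiableAt ℝ (uncurry u) (t + r, x + c * r)) :
    HasDerivAt (fun r => u (t + r) (x + c * r))
      (deriv (fun s => u s (x + c * r)) (t + r) + c * deriv (fun y => u (t + r) y) (x + c * r))
      r := by
  have hline : HasDerivAt (fun r : ℝ => (t + r, x + c * r)) ((1 : ℝ), c) r := by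
    simpa using ((hasDerivAt_id r).const_add t).prodMk (((hasDerivAt_id r).const_mul c).const_add x)
  have h := hu.hasFDerivAt.comp_hasDerivAt r hline
  rwa [fderiv_uncurry_apply hu, one_mul] at h

theorem apply_along_characteristic (hu : Differentiable ℝ (uncurry u))
    (hpde : ∀ t x, deriv (fun s => u s x) t + c * deriv (fun y => u t y) x = 0)
    (t x s : ℝ) : u (t + s) (x + c * s) = u t x := by
  have hconst : ∀ r, HasDerivAt (fun r => u (t + r) (x + c * r)) 0 r := fun r => by
    simpa only [hpde] using hasDerivAt_along_characteristic (hu (t + r, x + c * r))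
  simpa using is_const_of_deriv_eq_zero (fun r => (hconst r).differentiableAt)
    (fun r => (hconst r).deriv) s 0

theorem deriv_along_characteristic (hu : Differentiable ℝ (uncurry u))
    (hpde : ∀ t x, deriv (fun s => u s x) t + c * deriv (fun y => u t y) x = 0)
    (t x s : ℝ) :
    deriv (fun y => u (t + s) y) (x + c * s) = deriv (fun y => u t y) x := by
  have hshift : (fun y => u (t + s) (y + c * s)) = fun y => u t y :=
    funext fun y => apply_along_characteristic hu hpde t y s
  rw [← deriv_comp_add_const, hshift]

end Transport

theorem stmt_16_general (cm cp α : ℝ) (hcp : 0 < cp)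
    (um up : ℝ → ℝ → ℝ)
    (hum : ContDiff ℝ 1 (Function.uncurry um))
    (hup : ContDiff ℝ 1 (Function.uncurry up))
    (hpdem : ∀ t x, deriv (fun s => um s x) t + cm * deriv (fun y => um t y) x = 0)
    (hpdep : ∀ t x, deriv (fun s => up s x) t + cp * deriv (fun y => up t y) x = 0)
    (hjump : ∀ t, um t α = up t α)
    (hflux : ∀ t, cm * deriv (fun y => um t y) α = cp * deriv (fun y => up t y) α)
    (xj Δt yj : ℝ)
    (hyj : yj = α + (cm / cp) * (xj - α) - cm * Δt) :
    ∀ t : ℝ, up (t + Δt) xj = um t yj ∧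
      deriv (fun x => up (t + Δt) x) xj = (cm / cp) * deriv (fun x => um t x) yj := by
  intro t
  have hum' := hum.differentiable one_ne_zero
  have hup' := hup.differentiable one_ne_zero
  set s := (xj - α) / cp with hs
  set τ := t + Δt - s
  have hright : τ + s = t + Δt ∧ α + cp * s = xj := by
    constructor
    · ring
    · rw [hs]; field_simp; ring
  have hleft : t + (Δt - s) = τ ∧ yj + cm * (Δt - s) = α := by
    constructor
    · ring
    · rw [hyj, hs]; field_simp; ring
  have uR := Transport.apply_along_characteristic hup' hpdep τ α s
  have uL := Transport.apply_along_characteristic hum' hpdem t yj (Δt - s)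
  have uxR := Transport.deriv_along_characteristic hup' hpdep τ α s
  have uxL := Transport.deriv_along_characteristic hum' hpdem t yj (Δt - s)
  rw [hright.1, hright.2] at uR uxR
  rw [hleft.1, hleft.2] at uL uxL
  refine ⟨by rw [uR, ← uL, hjump], ?_⟩
  rw [uxR, ← uxL]
  field_simp
  linarith [hflux τ]

/-- Exact characteristic update across the interface for the
transport equation with piecewise constant speed (`c⁻` left of `α`, `c⁺` right of `α`)
under the interface conditions `[u] = 0` and `[c u_x] = 0`: if `x_j ≥ α`, `Δt > 0` and
`x_j − c⁺Δt ≤ α`, then with `y_j = α + (c⁻/c⁺)(x_j − α) − c⁻Δt` one has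
`u⁺(t+Δt, x_j) = u⁻(t, y_j)` and `u⁺_x(t+Δt, x_j) = (c⁻/c⁺) u⁻_x(t, y_j)`. -/
theorem stmt_16 (cm cp α : ℝ) (hcm : 0 < cm) (hcp : 0 < cp)
    (um up : ℝ → ℝ → ℝ)
    (hum : ContDiff ℝ 1 (Function.uncurry um))
    (hup : ContDiff ℝ 1 (Function.uncurry up))
    (hpdem : ∀ t x, deriv (fun s => um s x) t + cm * deriv (fun y => um t y) x = 0)
    (hpdep : ∀ t x, deriv (fun s => up s x) t + cp * deriv (fun y => up t y) x = 0)
    (hjump : ∀ t, um t α = up t α)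
    (hflux : ∀ t, cm * deriv (fun y => um t y) α = cp * deriv (fun y => up t y) α)
    (xj Δt yj : ℝ) (hxj : α ≤ xj) (hΔt : 0 < Δt) (hcross : xj - cp * Δt ≤ α)
    (hyj : yj = α + (cm / cp) * (xj - α) - cm * Δt) :
    ∀ t : ℝ, up (t + Δt) xj = um t yj ∧
      deriv (fun x => up (t + Δt) x) xj = (cm / cp) * deriv (fun x => um t x) yj :=
  stmt_16_general cm cp α hcp um up hum hup hpdem hpdep hjump hflux xj Δt yj hyj
end
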